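/- Let T : C[0,1] → C[0,1] be a positive linear operator with T(e₀) = e₀ and T(e₁) ≤ e₁ (pointwise on [0,1]), and let g ∈ C[0,1] be twice continuously differentiable on [0,1]. Then for all m, p ∈ ℕ and all x ∈ [0,1] one has |T^{m+p}(g;x) − T^m(g;x)| ≤ (1/2)·‖g''‖·|T^{m+p}(e₂;x) − T^m(e₂;x)| + (‖g''‖ + ‖g'‖)·|T^m(e₁;x) − T^{m+p}(e₁;x)|, where ‖g'‖ and ‖g''‖ denote the sup norms of the first and second derivatives of g on [0,1]. -/

import Mathlib

open Filter

noncomputable section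

/-- The unit interval `[0,1]` as a subset of `ℝ`. -/
abbrev I01 : Set ℝ := Set.Icc 0 1

/-- The space `C[0,1]` of continuous real-valued functions on `[0,1]`. -/
abbrev CI := C(I01, ℝ)

/-- The monomial `e i : x ↦ x ^ i`. -/
def e (i : ℕ) : CI := ⟨fun x => (x : ℝ) ^ i, (continuous_subtype_val).pow i⟩

/-- A linear operator on `C[0,1]` is positive if it maps nonnegative functions to
nonnegative functions. -/
def IsPositive (T : CI →ₗ[ℝ] CI) : Prop :=
  ∀ f : CI, (∀ x, 0 ≤ f x) → ∀ x, 0 ≤ T f x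

/-- The `m`-th iterate of `T`. -/
def iter (T : CI →ₗ[ℝ] CI) : ℕ → (CI →ₗ[ℝ] CI)
  | 0 => LinearMap.id
  | m + 1 => T ∘ₗ iter T m

/-- The sup norm `sup {|h x| : x ∈ [0,1]}` of a function on `[0,1]`. -/
def supAbsOn (h : ℝ → ℝ) : ℝ := sSup ((fun x => |h x|) '' I01)

/-!
Since `g'` is `‖g''‖`-Lipschitz, Taylor's formula gives, for each `y`, the two-sided bound
`|g z - g y - g' y * (z - y)| ≤ ‖g''‖ / 2 * (z - y) ^ 2` in `z`. Applying the positive operator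
`T ^ p`, which fixes `e₀`, turns this into a bound on `|T ^ p g y - g y|` by the moments
`T ^ p e₁ y` and `T ^ p e₂ y`; as `T ^ p e₁ ≤ e₁` and `y ≤ 1` it becomes
`‖g''‖ / 2 * (T ^ p e₂ - e₂) + (‖g''‖ + ‖g'‖) * (e₁ - T ^ p e₁)`. Applying the positive operator
`T ^ m` to this pointwise inequality gives the claim.
-/

open Set

theorem Convex.abs_sub_sub_mul_sub_le {s : Set ℝ} (hs : Convex ℝ s) {f f' : ℝ → ℝ} {M y t : ℝ}
    (hf : ∀ x ∈ s, HasDerivWithinAt f (f' x) s x)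
    (hf' : ∀ x ∈ s, |f' x - f' y| ≤ M * |x - y|) (hy : y ∈ s) (ht : t ∈ s) :
    |f t - f y - f' y * (t - y)| ≤ M / 2 * (t - y) ^ 2 := by
  -- Restrict to the segment `r ↦ y + r (t - y)` and compare with `M / 2 * r ^ 2 * (t - y) ^ 2`.
  set φ : ℝ → ℝ := fun r => f (y + r * (t - y)) - f y - r * (f' y * (t - y))
  have hseg : MapsTo (fun r => y + r * (t - y)) (Icc 0 1) s :=
    fun r hr => hs.add_smul_sub_mem hy ht hr
  have hφ : ∀ r ∈ Icc (0 : ℝ) 1,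
      HasDerivWithinAt φ ((f' (y + r * (t - y)) - f' y) * (t - y)) (Icc 0 1) r := by
    intro r hr
    have hline : HasDerivWithinAt (fun r => y + r * (t - y)) (t - y) (Icc 0 1) r := by
      simpa using ((hasDerivWithinAt_id r _).mul_const (t - y)).const_add y
    have := (((hf _ (hseg hr)).comp r hline hseg).sub_const (f y)).sub
      ((hasDerivWithinAt_id r _).mul_const (f' y * (t - y)))
    exact this.congr_deriv (by beta_reduce; ring)
  have hφ_bound : ∀ r ∈ Ico (0 : ℝ) 1,
      ‖(f' (y + r * (t - y)) - f' y) * (t - y)‖ ≤ M * r * (t - y) ^ 2 := by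
    intro r hr
    have hlip := hf' _ (hseg (Ico_subset_Icc_self hr))
    rw [add_sub_cancel_left, abs_mul, abs_of_nonneg hr.1] at hlip
    calc ‖(f' (y + r * (t - y)) - f' y) * (t - y)‖
        = |f' (y + r * (t - y)) - f' y| * |t - y| := by rw [Real.norm_eq_abs, abs_mul]
      _ ≤ M * (r * |t - y|) * |t - y| := by gcongr
      _ = M * r * (t - y) ^ 2 := by rw [mul_assoc, mul_assoc, abs_mul_abs_self, sq]; ring
  have key := image_norm_le_of_norm_deriv_right_le_deriv_boundary (a := 0) (b := 1)
    (B := fun r => M / 2 * r ^ 2 * (t - y) ^ 2) (B' := fun r => M * r * (t - y) ^ 2)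
    (fun r hr => (hφ r hr).continuousWithinAt)
    (fun r hr => (hφ r (Ico_subset_Icc_self hr)).mono_of_mem_nhdsWithin
      (mem_of_superset (Icc_mem_nhdsGE hr.2) (Icc_subset_Icc hr.1 le_rfl)))
    (by simp [φ])
    (fun r => (((hasDerivAt_pow 2 r).const_mul (M / 2)).mul_const ((t - y) ^ 2)).congr_deriv
      (by push_cast; ring))
    hφ_bound (right_mem_Icc.2 zero_le_one)
  simpa [φ] using key

theorem abs_le_supAbsOn {h : ℝ → ℝ} (hh : ContinuousOn h I01) {y : ℝ} (hy : y ∈ I01) :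
    |h y| ≤ supAbsOn h :=
  le_csSup (isCompact_Icc.image_of_continuousOn hh.abs).bddAbove ⟨y, hy, rfl⟩

@[simp]
theorem e_apply (i : ℕ) (x : I01) : e i x = (x : ℝ) ^ i := rfl

theorem iter_eq_pow (T : CI →ₗ[ℝ] CI) : ∀ m, iter T m = T ^ m
  | 0 => rfl
  | m + 1 => by rw [iter, iter_eq_pow T m, pow_succ']; rfl

theorem pow_apply_e_zero {T : CI →ₗ[ℝ] CI} (h0 : T (e 0) = e 0) (n : ℕ) :
    (T ^ n) (e 0) = e 0 := by
  rw [Module.End.pow_apply]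
  exact Function.iterate_fixed h0 n

namespace IsPositive

variable {T : CI →ₗ[ℝ] CI}

theorem monotone (hT : IsPositive T) : Monotone T := by
  intro f h hfh x
  have := hT (h - f) (fun y => sub_nonneg.2 (ContinuousMap.le_def.1 hfh y)) x
  rwa [map_sub, ContinuousMap.sub_apply, sub_nonneg] at this

theorem abs_apply_le (hT : IsPositive T) {f R : CI} (hfR : ∀ y, |f y| ≤ R y) (x : I01) :
    |T f x| ≤ T R x := by
  have hlower := ContinuousMap.le_def.1
    (hT.monotone (show -R ≤ f from fun y => neg_le_of_abs_le (hfR y))) x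
  have hupper := ContinuousMap.le_def.1
    (hT.monotone (show f ≤ R from fun y => le_of_abs_le (hfR y))) x
  rw [map_neg, ContinuousMap.neg_apply] at hlower
  exact abs_le.2 ⟨hlower, hupper⟩

theorem pow (hT : IsPositive T) : ∀ n, IsPositive (T ^ n)
  | 0 => fun f hf => by simpa using hf
  | n + 1 => fun f hf x => by
    rw [pow_succ', Module.End.mul_apply]
    exact hT _ (hT.pow n f hf) x

theorem pow_apply_e_one_le (hT : IsPositive T) (h1 : T (e 1) ≤ e 1) :
    ∀ n, (T ^ n) (e 1) ≤ e 1
  | 0 => le_rfl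
  | n + 1 => by
    rw [pow_succ', Module.End.mul_apply]
    exact (hT.monotone (hT.pow_apply_e_one_le h1 n)).trans h1

theorem abs_apply_sub_taylor_le (hT : IsPositive T) (h0 : T (e 0) = e 0) {f : CI} {y : I01}
    {b C : ℝ} (hf : ∀ z : I01, |f z - f y - b * (z - y)| ≤ C * (z - y) ^ 2) :
    |T f y - f y - b * (T (e 1) y - y)| ≤ C * (T (e 2) y - 2 * y * T (e 1) y + y ^ 2) := by
  set L : CI := (f y - b * y) • e 0 + b • e 1
  set Q : CI := e 2 - (2 * (y : ℝ)) • e 1 + ((y : ℝ) ^ 2) • e 0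
  have h := hT.abs_apply_le (f := f - L) (R := C • Q) (fun z => by
    convert hf z using 2
    · simp only [ContinuousMap.sub_apply, ContinuousMap.add_apply, ContinuousMap.smul_apply,
        e_apply, pow_zero, pow_one, smul_eq_mul, mul_one, L]
      ring
    · simp only [ContinuousMap.add_apply, ContinuousMap.sub_apply, ContinuousMap.smul_apply,
        e_apply, pow_zero, pow_one, smul_eq_mul, mul_one, Q]
      ring) y
  convert h using 2
  · simp only [map_sub, map_add, map_smul, h0, ContinuousMap.sub_apply, ContinuousMap.add_apply,
      ContinuousMap.smul_apply, e_apply, pow_zero, smul_eq_mul, mul_one, L]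
    ring
  · simp only [map_add, map_smul, map_sub, h0, ContinuousMap.add_apply, ContinuousMap.sub_apply,
      ContinuousMap.smul_apply, e_apply, pow_zero, smul_eq_mul, mul_one, Q]

theorem abs_apply_sub_self_le (hT : IsPositive T) (h0 : T (e 0) = e 0) (h1 : T (e 1) ≤ e 1)
    {f : CI} {b : I01 → ℝ} {C M : ℝ} (hC : 0 ≤ C) (hb : ∀ y, |b y| ≤ M)
    (hf : ∀ y z : I01, |f z - f y - b y * (z - y)| ≤ C / 2 * (z - y) ^ 2) (y : I01) :
    |T f y - f y| ≤ C / 2 * (T (e 2) y - y ^ 2) + (C + M) * (y - T (e 1) y) := by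
  have htaylor := hT.abs_apply_sub_taylor_le h0 (hf y)
  have hgap : 0 ≤ (y : ℝ) - T (e 1) y := by simpa using ContinuousMap.le_def.1 h1 y
  have hslope : |b y * (T (e 1) y - y)| = |b y| * (y - T (e 1) y) := by
    rw [abs_mul, abs_sub_comm, abs_of_nonneg hgap]
  have hmoment : C / 2 * (T (e 2) y - 2 * y * T (e 1) y + y ^ 2)
      ≤ C / 2 * (T (e 2) y - y ^ 2) + C * (y - T (e 1) y) := by
    nlinarith [mul_nonneg (mul_nonneg hC hgap) (sub_nonneg.2 y.2.2)]
  nlinarith [abs_sub_abs_le_abs_sub (T f y - f y) (b y * (T (e 1) y - y)),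
    mul_le_mul_of_nonneg_right (hb y) hgap]

theorem abs_pow_add_apply_sub_pow_apply_le (hT : IsPositive T) (h0 : T (e 0) = e 0)
    (h1 : T (e 1) ≤ e 1) {f : CI} {b : I01 → ℝ} {C M : ℝ} (hC : 0 ≤ C) (hb : ∀ y, |b y| ≤ M)
    (hf : ∀ y z : I01, |f z - f y - b y * (z - y)| ≤ C / 2 * (z - y) ^ 2) (m p : ℕ) (x : I01) :
    |(T ^ (m + p)) f x - (T ^ m) f x| ≤
      1 / 2 * C * |(T ^ (m + p)) (e 2) x - (T ^ m) (e 2) x|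
        + (C + M) * |(T ^ m) (e 1) x - (T ^ (m + p)) (e 1) x| := by
  set S := T ^ p
  have hS := (hT.pow p).abs_apply_sub_self_le (pow_apply_e_zero h0 p)
    (hT.pow_apply_e_one_le h1 p) hC hb hf
  set R : CI := (C / 2) • (S (e 2) - e 2) + (C + M) • (e 1 - S (e 1))
  have hM : 0 ≤ M := (abs_nonneg _).trans (hb x)
  calc |(T ^ (m + p)) f x - (T ^ m) f x| = |(T ^ m) (S f - f) x| := by
        simp [S, pow_add, map_sub]
    _ ≤ (T ^ m) R x := (hT.pow m).abs_apply_le (fun y => by simpa [R] using hS y) x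
    _ = C / 2 * ((T ^ (m + p)) (e 2) x - (T ^ m) (e 2) x)
          + (C + M) * ((T ^ m) (e 1) x - (T ^ (m + p)) (e 1) x) := by
        simp [R, S, pow_add]
    _ ≤ C / 2 * |(T ^ (m + p)) (e 2) x - (T ^ m) (e 2) x|
          + (C + M) * |(T ^ m) (e 1) x - (T ^ (m + p)) (e 1) x| := by
        gcongr <;> exact le_abs_self _
    _ = _ := by ring

end IsPositive

theorem stmt14 (T : CI →ₗ[ℝ] CI) (hpos : IsPositive T)
    (h0 : T (e 0) = e 0) (h1 : ∀ x : I01, T (e 1) x ≤ e 1 x)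
    (g g' g'' : ℝ → ℝ) (G : CI) (hGg : ∀ x : I01, G x = g x)
    (hd1 : ∀ x ∈ I01, HasDerivWithinAt g (g' x) I01 x)
    (hd2 : ∀ x ∈ I01, HasDerivWithinAt g' (g'' x) I01 x)
    (hc : ContinuousOn g'' I01) :
    ∀ m p : ℕ, ∀ x : I01,
      |iter T (m + p) G x - iter T m G x| ≤
        (1 / 2) * supAbsOn g'' * |iter T (m + p) (e 2) x - iter T m (e 2) x|
        + (supAbsOn g'' + supAbsOn g') * |iter T m (e 1) x - iter T (m + p) (e 1) x| := by
  intro m p x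
  have hg'_cont : ContinuousOn g' I01 := fun y hy => (hd2 y hy).continuousWithinAt
  have hg''_le : ∀ y ∈ I01, ‖g'' y‖ ≤ supAbsOn g'' := fun y hy => abs_le_supAbsOn hc hy
  have hg'_lip : ∀ u ∈ I01, ∀ v ∈ I01, |g' u - g' v| ≤ supAbsOn g'' * |u - v| :=
    fun u hu v hv => (convex_Icc 0 1).norm_image_sub_le_of_norm_hasDerivWithin_le hd2 hg''_le hv hu
  have hG_taylor : ∀ y z : I01,
      |G z - G y - g' y * (z - y)| ≤ supAbsOn g'' / 2 * (z - y) ^ 2 := fun y z => by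
    rw [hGg, hGg]
    exact (convex_Icc 0 1).abs_sub_sub_mul_sub_le hd1 (fun u hu => hg'_lip u hu y y.2) y.2 z.2
  simp only [iter_eq_pow]
  exact hpos.abs_pow_add_apply_sub_pow_apply_le h0 (ContinuousMap.le_def.2 h1)
    ((abs_nonneg _).trans (hg''_le 0 (left_mem_Icc.2 zero_le_one)))
    (fun y => abs_le_supAbsOn hg'_cont y.2) hG_taylor m p x
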